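/- arXiv:2307.04969 — 13 statements merged into one kernel-verified Lean document; each statement's English description precedes it below -/
import Mathlib

section
/- Let G be a connected simple graph on a vertex set X and let d be the shortest-path metric on X (so d(x,y) is the length of a shortest path in G from x to y). Let f, g : X → X be functions such that d(f x, f y) < d(g x, g y) for all x, y ∈ X with x ≠ y. If g is digitally continuous with respect to G, then f is a constant function. -/
/-- If `G` is a connected simple graph on `X` with shortest-path
metric `G.dist`, `f g : X → X` satisfy `d(fx,fy) < d(gx,gy)` for all `x ≠ y`,
and `g` is digitally continuous with respect to `G`, then `f` is constant. -/
theorem stmt_0 {X : Type*} (G : SimpleGraph X) (hG : G.Connected)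
    (f g : X → X)
    (hfg : ∀ x y : X, x ≠ y → G.dist (f x) (f y) < G.dist (g x) (g y))
    (hg : ∀ x y : X, G.Adj x y → g x = g y ∨ G.Adj (g x) (g y)) :
    ∃ c : X, ∀ x : X, f x = c := by
  have key : ∀ x y : X, G.Adj x y → f x = f y := by
    intro x y hxy
    have hlt := hfg x y hxy.ne
    have hle : G.dist (g x) (g y) ≤ 1 := by
      rcases hg x y hxy with h | h
      · simp [h, SimpleGraph.dist_self]
      · exact le_of_eq (SimpleGraph.dist_eq_one_iff_adj.mpr h)
    have h0 : G.dist (f x) (f y) = 0 := by omega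
    have := (hG.dist_eq_zero_iff (u := f x) (v := f y)).mp h0
    exact this
  obtain ⟨c⟩ := hG.nonempty
  refine ⟨f c, fun x => ?_⟩
  obtain ⟨w⟩ := hG x c
  induction w with
  | nil => rfl
  | cons h _ ih => rw [key _ _ h]; exact ih
end

section
/- Let G be a connected simple graph on a vertex set Y and let d be the shortest-path metric on Y. Let S : Y → Y be a quasi-contraction, i.e., there exists 0 ≤ q < 1 such that d(Sx,Sy) ≤ q·max{d(x,y), d(x,Sx), d(y,Sy), d(x,Sy), d(y,Sx)} for all x, y ∈ Y. Then there exists u ∈ Y such that (a) for every x ∈ Y there exists n₀ ∈ ℕ such that i ≥ n₀ implies S^i(x) = u (where S^i is the i-th iterate of S), and (b) u is the unique fixed point of S. -/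
/-- Let `G` be a connected simple graph on `Y` with shortest-path
metric `G.dist`, and let `S : Y → Y` be a quasi-contraction. Then there is a
`u ∈ Y` such that (a) for every `x`, the iterates `S^[i] x` equal `u` for all
sufficiently large `i`, and (b) `u` is the unique fixed point of `S`. -/
theorem stmt_5 {Y : Type*} (G : SimpleGraph Y) (hG : G.Connected)
    (S : Y → Y) (q : ℝ) (hq0 : 0 ≤ q) (hq1 : q < 1)
    (hS : ∀ x y : Y, (G.dist (S x) (S y) : ℝ) ≤
      q * max (max (max ((G.dist x y : ℝ)) ((G.dist x (S x) : ℝ)))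
          ((G.dist y (S y) : ℝ)))
        (max ((G.dist x (S y) : ℝ)) ((G.dist y (S x) : ℝ)))) :
    ∃ u : Y, (∀ x : Y, ∃ n₀ : ℕ, ∀ i : ℕ, n₀ ≤ i → S^[i] x = u) ∧
      (S u = u ∧ ∀ v : Y, S v = v → v = u) := by
  have hq1' : (0:ℝ) < 1 - q := by linarith
  -- uniqueness of fixed points
  have huniq : ∀ u v : Y, S u = u → S v = v → v = u := by
    intro u v hu hv
    have h := hS u v
    rw [hu, hv] at h
    have h0 : (G.dist u u : ℝ) = 0 := by
      rw [SimpleGraph.dist_self]; norm_num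
    have h0' : (G.dist v v : ℝ) = 0 := by
      rw [SimpleGraph.dist_self]; norm_num
    have hd : (G.dist v u : ℝ) = (G.dist u v : ℝ) := by
      rw [SimpleGraph.dist_comm]
    rw [h0, h0', hd] at h
    simp only [max_self] at h
    have hge : (0:ℝ) ≤ (G.dist u v : ℝ) := by positivity
    have hmax : max (max ((G.dist u v : ℝ)) 0) 0 = (G.dist u v : ℝ) := by
      rw [max_eq_left hge, max_eq_left hge]
    rw [hmax, max_self] at h
    have : (G.dist u v : ℝ) = 0 := by nlinarith
    have : G.dist u v = 0 := by exact_mod_cast this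
    exact ((hG.dist_eq_zero_iff).mp this).symm
  -- key : orbits are eventually constant
  have key : ∀ x : Y, ∃ k : ℕ, ∀ i j : ℕ, k ≤ i → k ≤ j → S^[i] x = S^[j] x := by
    intro x
    set B : ℝ := (G.dist x (S x) : ℝ) / (1 - q) with hB
    have hBnn : 0 ≤ B := div_nonneg (by positivity) hq1'.le
    set D : ℕ → ℕ := fun n =>
      ((Finset.range (n+1)) ×ˢ (Finset.range (n+1))).sup
        (fun p => G.dist (S^[p.1] x) (S^[p.2] x)) with hD
    have hle : ∀ n a b : ℕ, a ≤ n → b ≤ n →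
        G.dist (S^[a] x) (S^[b] x) ≤ D n := by
      intro n a b ha hb
      have hmem : ((a, b) : ℕ × ℕ) ∈ (Finset.range (n+1)) ×ˢ (Finset.range (n+1)) := by
        rw [Finset.mem_product]
        exact ⟨Finset.mem_range.mpr (Nat.lt_succ_of_le ha),
          Finset.mem_range.mpr (Nat.lt_succ_of_le hb)⟩
      exact Finset.le_sup (f := fun p : ℕ × ℕ => G.dist (S^[p.1] x) (S^[p.2] x)) hmem
    -- every pairwise distance within range n is ≤ d(x,Sx) + q * D n
    have hcase : ∀ n a b : ℕ, a ≤ n → b ≤ n →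
        (G.dist (S^[a] x) (S^[b] x) : ℝ) ≤ (G.dist x (S x) : ℝ) + q * (D n) := by
      intro n a b ha hb
      have hDnn : (0:ℝ) ≤ (D n : ℝ) := by positivity
      have hdnn : (0:ℝ) ≤ (G.dist x (S x) : ℝ) := by positivity
      have hM : ∀ a' b' : ℕ, a' ≤ n → b' ≤ n →
          (G.dist (S^[a'] x) (S^[b'] x) : ℝ) ≤ (D n : ℝ) := by
        intro a' b' ha' hb'
        exact_mod_cast hle n a' b' ha' hb'
      match a, b with
      | 0, 0 =>
        simp [SimpleGraph.dist_self]; positivity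
      | Nat.succ a', Nat.succ b' =>
        have h := hS (S^[a'] x) (S^[b'] x)
        rw [← Function.iterate_succ_apply' S a' x, ← Function.iterate_succ_apply' S b' x] at h
        have ha'n : a' ≤ n := le_trans (Nat.le_succ a') ha
        have hb'n : b' ≤ n := le_trans (Nat.le_succ b') hb
        have hmax : max (max (max ((G.dist (S^[a'] x) (S^[b'] x) : ℝ))
              ((G.dist (S^[a'] x) (S^[a'+1] x) : ℝ))) ((G.dist (S^[b'] x) (S^[b'+1] x) : ℝ)))
            (max ((G.dist (S^[a'] x) (S^[b'+1] x) : ℝ)) ((G.dist (S^[b'] x) (S^[a'+1] x) : ℝ)))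
            ≤ (D n : ℝ) := by
          apply max_le (max_le (max_le _ _) _) (max_le _ _)
          · exact hM a' b' ha'n hb'n
          · exact hM a' (a'+1) ha'n ha
          · exact hM b' (b'+1) hb'n hb
          · exact hM a' (b'+1) ha'n hb
          · exact hM b' (a'+1) hb'n ha
        calc (G.dist (S^[a'+1] x) (S^[b'+1] x) : ℝ) ≤ q * _ := h
          _ ≤ q * (D n : ℝ) := mul_le_mul_of_nonneg_left hmax hq0
          _ ≤ (G.dist x (S x) : ℝ) + q * (D n : ℝ) := by linarith
      | 0, Nat.succ b' =>
        have htri : (G.dist x (S^[b'+1] x) : ℝ) ≤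
            (G.dist x (S x) : ℝ) + (G.dist (S x) (S^[b'+1] x) : ℝ) := by
          exact_mod_cast hG.dist_triangle
        have h := hS x (S^[b'] x)
        rw [← Function.iterate_succ_apply' S b' x] at h
        have hb'n : b' ≤ n := le_trans (Nat.le_succ b') hb
        have hmax : max (max (max ((G.dist x (S^[b'] x) : ℝ))
              ((G.dist x (S x) : ℝ))) ((G.dist (S^[b'] x) (S^[b'+1] x) : ℝ)))
            (max ((G.dist x (S^[b'+1] x) : ℝ)) ((G.dist (S^[b'] x) (S x) : ℝ)))
            ≤ (D n : ℝ) := by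
          apply max_le (max_le (max_le _ _) _) (max_le _ _)
          · exact hM 0 b' (Nat.zero_le n) hb'n
          · exact hM 0 1 (Nat.zero_le n) (le_trans (Nat.one_le_iff_ne_zero.mpr (Nat.succ_ne_zero b')) hb)
          · exact hM b' (b'+1) hb'n hb
          · exact hM 0 (b'+1) (Nat.zero_le n) hb
          · exact hM b' 1 hb'n (le_trans (Nat.one_le_iff_ne_zero.mpr (Nat.succ_ne_zero b')) hb)
        have h2 : (G.dist (S x) (S^[b'+1] x) : ℝ) ≤ q * (D n : ℝ) :=
          le_trans h (mul_le_mul_of_nonneg_left hmax hq0)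
        simp only [Function.iterate_zero_apply]
        linarith
      | Nat.succ a', 0 =>
        have hcomm : (G.dist (S^[a'+1] x) (S^[0] x) : ℝ) = (G.dist (S^[0] x) (S^[a'+1] x) : ℝ) := by
          rw [SimpleGraph.dist_comm]
        rw [hcomm]
        have htri : (G.dist x (S^[a'+1] x) : ℝ) ≤
            (G.dist x (S x) : ℝ) + (G.dist (S x) (S^[a'+1] x) : ℝ) := by
          exact_mod_cast hG.dist_triangle
        have h := hS x (S^[a'] x)
        rw [← Function.iterate_succ_apply' S a' x] at h
        have ha'n : a' ≤ n := le_trans (Nat.le_succ a') ha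
        have hmax : max (max (max ((G.dist x (S^[a'] x) : ℝ))
              ((G.dist x (S x) : ℝ))) ((G.dist (S^[a'] x) (S^[a'+1] x) : ℝ)))
            (max ((G.dist x (S^[a'+1] x) : ℝ)) ((G.dist (S^[a'] x) (S x) : ℝ)))
            ≤ (D n : ℝ) := by
          apply max_le (max_le (max_le _ _) _) (max_le _ _)
          · exact hM 0 a' (Nat.zero_le n) ha'n
          · exact hM 0 1 (Nat.zero_le n) (le_trans (Nat.one_le_iff_ne_zero.mpr (Nat.succ_ne_zero a')) ha)
          · exact hM a' (a'+1) ha'n ha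
          · exact hM 0 (a'+1) (Nat.zero_le n) ha
          · exact hM a' 1 ha'n (le_trans (Nat.one_le_iff_ne_zero.mpr (Nat.succ_ne_zero a')) ha)
        have h2 : (G.dist (S x) (S^[a'+1] x) : ℝ) ≤ q * (D n : ℝ) :=
          le_trans h (mul_le_mul_of_nonneg_left hmax hq0)
        simp only [Function.iterate_zero_apply]
        linarith
    -- hence D n ≤ B
    have hDB : ∀ n : ℕ, (D n : ℝ) ≤ B := by
      intro n
      have hne : ((Finset.range (n+1)) ×ˢ (Finset.range (n+1))).Nonempty :=
        Finset.Nonempty.product ⟨0, Finset.mem_range.mpr (Nat.succ_pos n)⟩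
          ⟨0, Finset.mem_range.mpr (Nat.succ_pos n)⟩
      obtain ⟨p, hp, hpe⟩ := Finset.exists_mem_eq_sup _ hne
        (fun p => G.dist (S^[p.1] x) (S^[p.2] x))
      have hp1 := Finset.mem_range.mp (Finset.mem_product.mp hp).1
      have hp2 := Finset.mem_range.mp (Finset.mem_product.mp hp).2
      have h := hcase n p.1 p.2 (Nat.lt_succ_iff.mp hp1) (Nat.lt_succ_iff.mp hp2)
      have hDn : (D n : ℝ) = (G.dist (S^[p.1] x) (S^[p.2] x) : ℝ) := by
        rw [hD]; exact_mod_cast congrArg (Nat.cast : ℕ → ℝ) hpe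
      rw [← hDn] at h
      rw [hB, le_div_iff₀ hq1']
      nlinarith [h]
    have hbound : ∀ i j : ℕ, (G.dist (S^[i] x) (S^[j] x) : ℝ) ≤ B := by
      intro i j
      calc (G.dist (S^[i] x) (S^[j] x) : ℝ) ≤ (D (max i j) : ℝ) := by
            exact_mod_cast hle (max i j) i j (le_max_left i j) (le_max_right i j)
        _ ≤ B := hDB (max i j)
    -- geometric decay
    have hgeo : ∀ k i j : ℕ, k ≤ i → k ≤ j →
        (G.dist (S^[i] x) (S^[j] x) : ℝ) ≤ q ^ k * B := by
      intro k
      induction k with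
      | zero => intro i j _ _; simpa using hbound i j
      | succ k ih =>
        intro i j hi hj
        obtain ⟨i', rfl⟩ := Nat.exists_eq_add_of_le hi
        obtain ⟨j', rfl⟩ := Nat.exists_eq_add_of_le hj
        have hi' : k ≤ k + i' := Nat.le_add_right k i'
        have hj' : k ≤ k + j' := Nat.le_add_right k j'
        have e1 : S^[k + 1 + i'] x = S (S^[k + i'] x) := by
          rw [show k + 1 + i' = (k + i') + 1 by ring, Function.iterate_succ_apply']
        have e2 : S^[k + 1 + j'] x = S (S^[k + j'] x) := by
          rw [show k + 1 + j' = (k + j') + 1 by ring, Function.iterate_succ_apply']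
        rw [e1, e2]
        have h := hS (S^[k + i'] x) (S^[k + j'] x)
        have hmax : max (max (max ((G.dist (S^[k+i'] x) (S^[k+j'] x) : ℝ))
              ((G.dist (S^[k+i'] x) (S (S^[k+i'] x)) : ℝ))) ((G.dist (S^[k+j'] x) (S (S^[k+j'] x)) : ℝ)))
            (max ((G.dist (S^[k+i'] x) (S (S^[k+j'] x)) : ℝ)) ((G.dist (S^[k+j'] x) (S (S^[k+i'] x)) : ℝ)))
            ≤ q ^ k * B := by
          have r1 : S (S^[k+i'] x) = S^[k+i'+1] x := (Function.iterate_succ_apply' S _ x).symm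
          have r2 : S (S^[k+j'] x) = S^[k+j'+1] x := (Function.iterate_succ_apply' S _ x).symm
          rw [r1, r2]
          apply max_le (max_le (max_le _ _) _) (max_le _ _)
          · exact ih _ _ hi' hj'
          · exact ih _ _ hi' (le_trans hi' (Nat.le_succ _))
          · exact ih _ _ hj' (le_trans hj' (Nat.le_succ _))
          · exact ih _ _ hi' (le_trans hj' (Nat.le_succ _))
          · exact ih _ _ hj' (le_trans hi' (Nat.le_succ _))
        calc (G.dist (S (S^[k+i'] x)) (S (S^[k+j'] x)) : ℝ) ≤ q * _ := h
          _ ≤ q * (q ^ k * B) := mul_le_mul_of_nonneg_left hmax hq0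
          _ = q ^ (k+1) * B := by ring
    -- pick k with q^k * B < 1
    obtain ⟨k, hk⟩ : ∃ k : ℕ, q ^ k * B < 1 := by
      rcases eq_or_lt_of_le hBnn with hB0 | hBpos
      · exact ⟨0, by rw [← hB0]; norm_num⟩
      · obtain ⟨k, hk⟩ := exists_pow_lt_of_lt_one (by positivity : (0:ℝ) < 1 / B) hq1
        refine ⟨k, ?_⟩
        rw [lt_div_iff₀ hBpos] at hk
        linarith
    refine ⟨k, fun i j hi hj => ?_⟩
    have h := lt_of_le_of_lt (hgeo k i j hi hj) hk
    have h0 : G.dist (S^[i] x) (S^[j] x) = 0 := by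
      have : (G.dist (S^[i] x) (S^[j] x) : ℝ) < 1 := h
      exact_mod_cast Nat.lt_one_iff.mp (by exact_mod_cast this)
    exact (hG.dist_eq_zero_iff).mp h0
  -- assemble
  obtain ⟨x₀⟩ := hG.nonempty
  obtain ⟨k₀, hk₀⟩ := key x₀
  refine ⟨S^[k₀] x₀, ?_, ?_, ?_⟩
  · intro x
    obtain ⟨k, hk⟩ := key x
    have hfix : S (S^[k] x) = S^[k] x :=
      (Function.iterate_succ_apply' S k x).symm.trans (hk (k+1) k (Nat.le_succ k) le_rfl)
    have hfix₀ : S (S^[k₀] x₀) = S^[k₀] x₀ :=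
      (Function.iterate_succ_apply' S k₀ x₀).symm.trans (hk₀ (k₀+1) k₀ (Nat.le_succ k₀) le_rfl)
    refine ⟨k, fun i hi => ?_⟩
    rw [hk i k hi le_rfl]
    exact huniq _ _ hfix₀ hfix
  · exact (Function.iterate_succ_apply' S k₀ x₀).symm.trans (hk₀ (k₀+1) k₀ (Nat.le_succ k₀) le_rfl)
  · intro v hv
    have hfix₀ : S (S^[k₀] x₀) = S^[k₀] x₀ :=
      (Function.iterate_succ_apply' S k₀ x₀).symm.trans (hk₀ (k₀+1) k₀ (Nat.le_succ k₀) le_rfl)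
    exact huniq _ _ hfix₀ hv
end

section
/- Let G be a connected simple graph on a vertex set Y and let d be the shortest-path metric on Y. Let S : Y → Y be a digital contraction, i.e., there exists 0 ≤ q < 1 such that d(Sx,Sy) ≤ q·d(x,y) for all x, y ∈ Y. Then S is a constant function. -/
/-- Let `G` be a connected simple graph on `Y` with shortest-path
metric `G.dist`. Every digital contraction `S : Y → Y` is constant. -/
theorem stmt_6 {Y : Type*} (G : SimpleGraph Y) (hG : G.Connected)
    (S : Y → Y) (q : ℝ) (hq0 : 0 ≤ q) (hq1 : q < 1)
    (hS : ∀ x y : Y, (G.dist (S x) (S y) : ℝ) ≤ q * (G.dist x y : ℝ)) :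
    ∃ c : Y, ∀ x : Y, S x = c := by
  have key : ∀ x y : Y, G.Adj x y → S x = S y := by
    intro x y hxy
    have hd : G.dist x y = 1 := SimpleGraph.dist_eq_one_iff_adj.mpr hxy
    have h := hS x y
    rw [hd] at h
    have hlt : (G.dist (S x) (S y) : ℝ) < 1 := by
      calc (G.dist (S x) (S y) : ℝ) ≤ q * 1 := by push_cast at h ⊢; linarith
        _ < 1 := by linarith
    have hz : G.dist (S x) (S y) = 0 := by exact_mod_cast Nat.lt_one_iff.mp (by exact_mod_cast hlt)
    exact hG.dist_eq_zero_iff.mp hz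
  obtain ⟨x0⟩ := hG.nonempty
  refine ⟨S x0, fun x => ?_⟩
  obtain ⟨w⟩ := hG x x0
  induction w with
  | nil => rfl
  | cons h _ ih => exact (key _ _ h).trans ih
end

section
/- Let (X,d) be a nonempty uniformly discrete metric space and let f, g : X → X be self-maps such that: (i) f(X) ⊆ g(X); (ii) there exists q with 0 < q < 1 such that d(f x, f y) ≤ q·d(g x, g y) for all x, y ∈ X; and (iii) f and g commute (f ∘ g = g ∘ f). Then f and g have a unique common fixed point in X, i.e., there is exactly one z ∈ X with f(z) = z and g(z) = z. -/
/-- Let `(X,d)` be a nonempty uniformly discrete metric space and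
`f, g : X → X` with `f(X) ⊆ g(X)`, `d(fx,fy) ≤ q·d(gx,gy)` for some
`0 < q < 1`, and `f ∘ g = g ∘ f`. Then `f` and `g` have a unique common fixed
point. -/
theorem stmt_8 {X : Type*} [MetricSpace X] [Nonempty X]
    (hud : ∃ ε : ℝ, 0 < ε ∧ ∀ x y : X, x ≠ y → ε ≤ dist x y)
    (f g : X → X)
    (hrange : Set.range f ⊆ Set.range g)
    (q : ℝ) (hq0 : 0 < q) (hq1 : q < 1)
    (hcontr : ∀ x y : X, dist (f x) (f y) ≤ q * dist (g x) (g y))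
    (hcomm : ∀ x : X, f (g x) = g (f x)) :
    ∃! z : X, f z = z ∧ g z = z := by
  obtain ⟨ε, hε, hεd⟩ := hud
  have hT : ∀ a : X, ∃ b, g b = f a := fun a => hrange ⟨a, rfl⟩
  choose T hTg using hT
  set x : ℕ → X := fun n => T^[n] (Classical.arbitrary X) with hx
  have hxs : ∀ n, x (n + 1) = T (x n) := fun n =>
    Function.iterate_succ_apply' T n _
  have key : ∀ n, dist (f (x (n+1))) (f (x n)) ≤ q ^ n * dist (f (x 1)) (f (x 0)) := by
    intro n
    induction n with
    | zero => simp
    | succ n ih =>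
      have h1 : dist (f (x (n+2))) (f (x (n+1))) ≤ q * dist (g (x (n+2))) (g (x (n+1))) :=
        hcontr _ _
      have h2 : g (x (n+2)) = f (x (n+1)) := by rw [hxs (n+1)]; exact hTg _
      have h3 : g (x (n+1)) = f (x n) := by rw [hxs n]; exact hTg _
      rw [h2, h3] at h1
      calc dist (f (x (n+2))) (f (x (n+1))) ≤ q * dist (f (x (n+1))) (f (x n)) := h1
        _ ≤ q * (q ^ n * dist (f (x 1)) (f (x 0))) :=
            mul_le_mul_of_nonneg_left ih hq0.le
        _ = q ^ (n+1) * dist (f (x 1)) (f (x 0)) := by ring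
  have htend : Filter.Tendsto (fun n => q ^ n * dist (f (x 1)) (f (x 0)))
      Filter.atTop (nhds 0) := by
    simpa using (tendsto_pow_atTop_nhds_zero_of_lt_one hq0.le hq1).mul_const
      (dist (f (x 1)) (f (x 0)))
  obtain ⟨n, hn⟩ := (htend.eventually (gt_mem_nhds hε)).exists
  have heq : f (x (n+1)) = f (x n) := by
    by_contra h
    exact absurd (hεd _ _ h) (not_le.2 ((key n).trans_lt hn))
  -- a := x (n+1) is a coincidence point: f a = g a
  set a : X := x (n+1) with ha
  have hfa : f a = g a := by
    have h3 : g (x (n+1)) = f (x n) := by rw [hxs n]; exact hTg _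
    rw [ha, h3, heq]
  have hgw : g (f a) = f (f a) := by rw [← hcomm a, ← hfa]
  have hfw : f (f a) = f a := by
    have h1 : dist (f (f a)) (f a) ≤ q * dist (g (f a)) (g a) := hcontr _ _
    rw [hgw, ← hfa] at h1
    have h2 : dist (f (f a)) (f a) = 0 := by
      nlinarith [dist_nonneg (x := f (f a)) (y := f a)]
    exact dist_eq_zero.mp h2
  refine ⟨f a, ⟨hfw, by rw [hgw, hfw]⟩, ?_⟩
  rintro z ⟨hfz, hgz⟩
  have h1 : dist (f z) (f (f a)) ≤ q * dist (g z) (g (f a)) := hcontr _ _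
  rw [hfz, hfw, hgz, hgw, hfw] at h1
  have h2 : dist z (f a) = 0 := by nlinarith [dist_nonneg (x := z) (y := f a)]
  exact dist_eq_zero.mp h2
end

section
/- Let G be a connected simple graph on a vertex set X and let d be the shortest-path metric on X. Let f, g : X → X be such that for some q with 0 < q < 1, d(f x, f y) ≤ q·d(g x, g y) for all x, y ∈ X. If g is digitally continuous with respect to G, then f is a constant function. -/
/-- Let `G` be a connected simple graph on `X` with shortest-path
metric `G.dist`. If `f, g : X → X` satisfy `d(fx,fy) ≤ q·d(gx,gy)` for some
`0 < q < 1` and `g` is digitally continuous with respect to `G`, then `f` is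
constant. -/
theorem stmt_9 {X : Type*} (G : SimpleGraph X) (hG : G.Connected)
    (f g : X → X) (q : ℝ) (hq0 : 0 < q) (hq1 : q < 1)
    (hfg : ∀ x y : X, (G.dist (f x) (f y) : ℝ) ≤ q * (G.dist (g x) (g y) : ℝ))
    (hg : ∀ x y : X, G.Adj x y → g x = g y ∨ G.Adj (g x) (g y)) :
    ∃ c : X, ∀ x : X, f x = c := by
  have key : ∀ x y : X, G.Adj x y → f x = f y := by
    intro x y hxy
    have hd : (G.dist (g x) (g y) : ℝ) ≤ 1 := by
      rcases hg x y hxy with h | h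
      · simp [h, SimpleGraph.dist_self]
      · have := G.dist_le h.toWalk
        simp only [SimpleGraph.Walk.length_cons, SimpleGraph.Walk.length_nil] at this
        exact_mod_cast this
    have h2 : (G.dist (f x) (f y) : ℝ) < 1 := by
      calc (G.dist (f x) (f y) : ℝ) ≤ q * (G.dist (g x) (g y) : ℝ) := hfg x y
        _ ≤ q * 1 := by nlinarith [hd, hq0.le]
        _ < 1 := by linarith
    have h3 : G.dist (f x) (f y) = 0 := by exact_mod_cast Nat.lt_one_iff.mp (by exact_mod_cast h2)
    exact (hG.dist_eq_zero_iff (u := f x) (v := f y)).mp h3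
  obtain ⟨x0⟩ := hG.nonempty
  refine ⟨f x0, fun x => ?_⟩
  have hr : G.Reachable x0 x := hG x0 x
  obtain ⟨w⟩ := hr
  induction w with
  | nil => rfl
  | cons h p ih => rw [ih, key _ _ h.symm]
end

section
/- Let (X,d) be a metric space and let T₁, T₂ : X → X with T₂ surjective. Suppose there exist α > 0 and β > 0 such that d(T₁x, T₂y) ≥ α·d(x,y) + β·(d(x,T₁x) + d(y,T₂y)) for all x, y ∈ X. Then T₁ and T₂ are both the identity map on X. Moreover, if α > 1, then X has at most one point. -/
/-- Let `(X,d)` be a metric space, `T₁ T₂ : X → X` with `T₂`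
surjective, and suppose `d(T₁x,T₂y) ≥ α·d(x,y) + β·(d(x,T₁x) + d(y,T₂y))` for
all `x, y`, where `α, β > 0`. Then `T₁ = T₂ = id`. Moreover, if `α > 1` then
`X` has at most one point. -/
theorem stmt_11 {X : Type*} [MetricSpace X] (T₁ T₂ : X → X)
    (hsurj : Function.Surjective T₂)
    (α β : ℝ) (hα : 0 < α) (hβ : 0 < β)
    (h : ∀ x y : X, α * dist x y + β * (dist x (T₁ x) + dist y (T₂ y)) ≤
      dist (T₁ x) (T₂ y)) :
    (∀ x : X, T₁ x = x) ∧ (∀ x : X, T₂ x = x) ∧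
      (1 < α → ∀ x y : X, x = y) := by
  have key : ∀ x : X, T₁ x = x ∧ T₂ x = x := by
    intro x
    obtain ⟨y, hy⟩ := hsurj (T₁ x)
    have hx := h x y
    rw [hy, dist_self] at hx
    have h1 : 0 ≤ α * dist x y := mul_nonneg hα.le dist_nonneg
    have h2 : 0 ≤ β * (dist x (T₁ x) + dist y (T₁ x)) :=
      mul_nonneg hβ.le (add_nonneg dist_nonneg dist_nonneg)
    have hdxy : dist x y = 0 := by
      nlinarith [dist_nonneg (x := x) (y := T₁ x), dist_nonneg (x := y) (y := T₁ x),
        dist_nonneg (x := x) (y := y)]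
    have hxT : dist x (T₁ x) = 0 := by
      nlinarith [dist_nonneg (x := x) (y := T₁ x), dist_nonneg (x := y) (y := T₁ x)]
    have hT1 : T₁ x = x := (dist_eq_zero.mp hxT).symm
    have hyx : y = x := dist_eq_zero.mp (by rwa [dist_comm] at hdxy)
    exact ⟨hT1, by rw [← hyx, hy, hT1, hyx]⟩
  refine ⟨fun x => (key x).1, fun x => (key x).2, fun hα1 x y => ?_⟩
  have hx := h x y
  rw [(key x).1, (key y).2, dist_self, dist_self] at hx
  have : dist x y = 0 := by nlinarith [dist_nonneg (x := x) (y := y)]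
  exact dist_eq_zero.mp this
end

section
/- Let (X,d) be a metric space and let T₁, T₂ : X → X with T₂ surjective. Suppose there exist α > 0 and β > 0 such that d(T₁x, T₂y) ≥ α·d(x,y) + β·(d(x,T₂y) + d(y,T₁x)) for all x, y ∈ X. Then T₁ and T₂ are both the identity map on X. Moreover, if α > 1, then X has at most one point. -/
/-- Let `(X,d)` be a metric space, `T₁ T₂ : X → X` with `T₂`
surjective, and suppose `d(T₁x,T₂y) ≥ α·d(x,y) + β·(d(x,T₂y) + d(y,T₁x))` for
all `x, y`, where `α, β > 0`. Then `T₁ = T₂ = id`. Moreover, if `α > 1` then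
`X` has at most one point. -/
theorem stmt_12 {X : Type*} [MetricSpace X] (T₁ T₂ : X → X)
    (hsurj : Function.Surjective T₂)
    (α β : ℝ) (hα : 0 < α) (hβ : 0 < β)
    (h : ∀ x y : X, α * dist x y + β * (dist x (T₂ y) + dist y (T₁ x)) ≤
      dist (T₁ x) (T₂ y)) :
    (∀ x : X, T₁ x = x) ∧ (∀ x : X, T₂ x = x) ∧
      (1 < α → ∀ x y : X, x = y) := by
  have key : ∀ x : X, T₁ x = x ∧ T₂ x = x := by
    intro x
    obtain ⟨y, hy⟩ := hsurj (T₁ x)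
    have := h x y
    rw [hy, dist_self] at this
    have hxy : dist x y = 0 := by
      nlinarith [dist_nonneg (x := x) (y := y), dist_nonneg (x := x) (y := T₁ x),
        dist_nonneg (x := y) (y := T₁ x)]
    have hxT : dist x (T₁ x) = 0 := by
      nlinarith [dist_nonneg (x := x) (y := y), dist_nonneg (x := x) (y := T₁ x),
        dist_nonneg (x := y) (y := T₁ x)]
    have h1 : T₁ x = x := (dist_eq_zero.mp hxT).symm
    have h2 : y = x := (dist_eq_zero.mp hxy).symm
    exact ⟨h1, by rw [← h2, hy, h1, h2]⟩
  refine ⟨fun x => (key x).1, fun x => (key x).2, fun hα1 x y => ?_⟩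
  have := h x y
  rw [(key x).1, (key y).2] at this
  have : dist x y = 0 := by
    nlinarith [dist_nonneg (x := x) (y := y), dist_comm x y]
  exact dist_eq_zero.mp this
end

section
/- Let (X,d) be a metric space and let T₁, T₂ : X → X with T₂ surjective. Suppose there exist α > 0, β > 0, γ > 0, and η > 0 such that d(T₁x, T₂y) ≥ α·d(x,y) + β·d(x,T₁x) + γ·d(y,T₂y) + η·(d(x,T₁x) + d(y,T₂y)) for all x, y ∈ X. Then T₁ and T₂ are both the identity map on X. Moreover, if α > 1, then X has at most one point. -/
/-- Let `(X,d)` be a metric space, `T₁ T₂ : X → X` with `T₂`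
surjective, and suppose
`d(T₁x,T₂y) ≥ α·d(x,y) + β·d(x,T₁x) + γ·d(y,T₂y) + η·(d(x,T₁x) + d(y,T₂y))`
for all `x, y`, where `α, β, γ, η > 0`. Then `T₁ = T₂ = id`. Moreover, if
`α > 1` then `X` has at most one point. -/
theorem stmt_13 {X : Type*} [MetricSpace X] (T₁ T₂ : X → X)
    (hsurj : Function.Surjective T₂)
    (α β γ η : ℝ) (hα : 0 < α) (hβ : 0 < β) (hγ : 0 < γ) (hη : 0 < η)
    (h : ∀ x y : X, α * dist x y + β * dist x (T₁ x) + γ * dist y (T₂ y) +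
        η * (dist x (T₁ x) + dist y (T₂ y)) ≤ dist (T₁ x) (T₂ y)) :
    (∀ x : X, T₁ x = x) ∧ (∀ x : X, T₂ x = x) ∧
      (1 < α → ∀ x y : X, x = y) := by
  have key : ∀ x : X, T₁ x = x ∧ T₂ x = x := by
    intro x
    obtain ⟨y, hy⟩ := hsurj (T₁ x)
    have hxy := h x y
    rw [hy, dist_self] at hxy
    have d1 : (0:ℝ) ≤ dist x y := dist_nonneg
    have d2 : (0:ℝ) ≤ dist x (T₁ x) := dist_nonneg
    have d3 : (0:ℝ) ≤ dist y (T₁ x) := dist_nonneg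
    have h1 : dist x (T₁ x) = 0 := by
      nlinarith [mul_nonneg hα.le d1, mul_nonneg hγ.le d3, mul_nonneg hη.le d3]
    have h2 : dist x y = 0 := by
      nlinarith [mul_nonneg hβ.le d2, mul_nonneg hγ.le d3, mul_nonneg hη.le d2, mul_nonneg hη.le d3]
    have h3 : dist y (T₂ y) = 0 := by
      rw [hy]
      nlinarith [mul_nonneg hα.le d1, mul_nonneg hβ.le d2, mul_nonneg hη.le d2]
    have e1 : T₁ x = x := (dist_eq_zero.mp h1).symm
    have e2 : y = x := (dist_eq_zero.mp h2).symm
    refine ⟨e1, ?_⟩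
    have := dist_eq_zero.mp h3
    rw [e2] at this
    exact this.symm
  refine ⟨fun x => (key x).1, fun x => (key x).2, fun hα1 x y => ?_⟩
  have hxy := h x y
  rw [(key x).1, (key y).2, dist_self x, dist_self y] at hxy
  have d1 : (0:ℝ) ≤ dist x y := dist_nonneg
  have : dist x y = 0 := by nlinarith
  exact dist_eq_zero.mp this
end

section
/- Let (X,d) be a metric space and let T₁, T₂ : X → X with T₂ surjective. Suppose there exist α > 0 and β > 0 such that d(T₁x, T₂y) ≥ α·(d(x,y) + d(x,T₁x) + d(y,T₂y)) + β·(d(x,T₂y) + d(y,T₁x)) for all x, y ∈ X. Then T₁ and T₂ are both the identity map on X. Moreover, if α > 1, then X has at most one point. -/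
/-- Let `(X,d)` be a metric space, `T₁ T₂ : X → X` with `T₂`
surjective, and suppose
`d(T₁x,T₂y) ≥ α·(d(x,y) + d(x,T₁x) + d(y,T₂y)) + β·(d(x,T₂y) + d(y,T₁x))`
for all `x, y`, where `α, β > 0`. Then `T₁ = T₂ = id`. Moreover, if `α > 1`
then `X` has at most one point. -/
theorem stmt_14 {X : Type*} [MetricSpace X] (T₁ T₂ : X → X)
    (hsurj : Function.Surjective T₂)
    (α β : ℝ) (hα : 0 < α) (hβ : 0 < β)
    (h : ∀ x y : X, α * (dist x y + dist x (T₁ x) + dist y (T₂ y)) +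
        β * (dist x (T₂ y) + dist y (T₁ x)) ≤ dist (T₁ x) (T₂ y)) :
    (∀ x : X, T₁ x = x) ∧ (∀ x : X, T₂ x = x) ∧
      (1 < α → ∀ x y : X, x = y) := by
  have key : ∀ x : X, T₁ x = x ∧ T₂ x = x := by
    intro x
    obtain ⟨y, hy⟩ := hsurj (T₁ x)
    have h1 := h x y
    rw [hy, dist_self] at h1
    have n1 := dist_nonneg (x := x) (y := y)
    have n2 := dist_nonneg (x := x) (y := T₁ x)
    have n3 := dist_nonneg (x := y) (y := T₂ y)
    have n4 := dist_nonneg (x := x) (y := T₂ y)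
    have n5 := dist_nonneg (x := y) (y := T₁ x)
    have d2 : dist x (T₁ x) = 0 := by nlinarith
    have d1 : dist x y = 0 := by nlinarith
    have hx1 : T₁ x = x := by rw [← dist_eq_zero]; rw [dist_comm]; exact d2
    have hxy : y = x := by rw [← dist_eq_zero, dist_comm]; exact d1
    rw [hxy] at hy
    exact ⟨hx1, hy.trans hx1⟩
  refine ⟨fun x => (key x).1, fun x => (key x).2, fun hα1 x y => ?_⟩
  have h1 := h x y
  rw [(key x).1, (key y).2, dist_self, dist_self] at h1
  have n1 := dist_nonneg (x := x) (y := y)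
  rw [← dist_eq_zero]
  nlinarith [dist_comm x y, dist_comm y x]
end

section
/- Let (X,d) be a metric space and let T₁, T₂ : X → X with T₂ surjective. Suppose there exist α > 0, β > 0, and γ > 0 such that d(T₁x, T₂y) ≥ α·max{d(x,y), d(x,T₁x), d(y,T₂y)} + β·max{d(x,T₂y), d(x,y)} + γ·d(x,y) for all x, y ∈ X. Then T₁ and T₂ are both the identity map on X. Moreover, if α > 1, then X has at most one point. -/
/-- Let `(X,d)` be a metric space, `T₁ T₂ : X → X` with `T₂`
surjective, and suppose
`d(T₁x,T₂y) ≥ α·max{d(x,y), d(x,T₁x), d(y,T₂y)} + β·max{d(x,T₂y), d(x,y)} + γ·d(x,y)`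
for all `x, y`, where `α, β, γ > 0`. Then `T₁ = T₂ = id`. Moreover, if `α > 1`
then `X` has at most one point. -/
theorem stmt_15 {X : Type*} [MetricSpace X] (T₁ T₂ : X → X)
    (hsurj : Function.Surjective T₂)
    (α β γ : ℝ) (hα : 0 < α) (hβ : 0 < β) (hγ : 0 < γ)
    (h : ∀ x y : X, α * max (max (dist x y) (dist x (T₁ x))) (dist y (T₂ y)) +
        β * max (dist x (T₂ y)) (dist x y) + γ * dist x y ≤
        dist (T₁ x) (T₂ y)) :
    (∀ x : X, T₁ x = x) ∧ (∀ x : X, T₂ x = x) ∧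
      (1 < α → ∀ x y : X, x = y) := by
  have h1 : ∀ x : X, T₁ x = x := by
    intro x
    obtain ⟨y, hy⟩ := hsurj (T₁ x)
    have hx := h x y
    rw [hy, dist_self] at hx
    have hd : dist x (T₁ x) ≤ max (max (dist x y) (dist x (T₁ x))) (dist y (T₁ x)) :=
      le_max_of_le_left (le_max_right _ _)
    have h0 : dist x (T₁ x) = 0 := by
      nlinarith [mul_le_mul_of_nonneg_left hd hα.le,
        mul_nonneg hβ.le (le_trans dist_nonneg (le_max_right (dist x (T₁ x)) (dist x y))),
        mul_nonneg hγ.le (dist_nonneg (x := x) (y := y)),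
        dist_nonneg (x := x) (y := T₁ x)]
    exact (dist_eq_zero.mp h0).symm
  have h2 : ∀ z : X, T₂ z = z := by
    intro z
    have hx := h (T₂ z) z
    rw [h1 (T₂ z), dist_self] at hx
    have hd : dist (T₂ z) z ≤ max (max (dist (T₂ z) z) (0:ℝ)) (dist z (T₂ z)) :=
      le_max_of_le_left (le_max_left _ _)
    have h0 : dist (T₂ z) z = 0 := by
      nlinarith [mul_le_mul_of_nonneg_left hd hα.le,
        mul_nonneg hβ.le (le_trans dist_nonneg (le_max_right (0:ℝ) (dist (T₂ z) z))),
        dist_nonneg (x := T₂ z) (y := z)]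
    exact dist_eq_zero.mp h0
  refine ⟨h1, h2, fun _ x y => ?_⟩
  have hx := h x y
  rw [h1 x, h2 y, dist_self, dist_self] at hx
  have hd : dist x y ≤ max (max (dist x y) (0:ℝ)) (0:ℝ) :=
    le_max_of_le_left (le_max_left _ _)
  have h0 : dist x y = 0 := by
    nlinarith [mul_le_mul_of_nonneg_left hd hα.le,
      mul_nonneg hβ.le (le_trans dist_nonneg (le_max_right (dist x y) (dist x y))),
      dist_nonneg (x := x) (y := y)]
  exact dist_eq_zero.mp h0
end

section
/- Let G be a simple graph on a vertex set X and let X' be a proper subset of X that is a retract of G, i.e., there is a digitally continuous r : X → X with r(X) ⊆ X' and r(x) = x for all x ∈ X'. Then no subset A ⊆ X' is a freezing set for G. -/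
/-- `g : X → X` is digitally continuous with respect to the simple graph `G`. -/
def DigContinuous {X : Type*} (G : SimpleGraph X) (g : X → X) : Prop :=
  ∀ x y : X, G.Adj x y → g x = g y ∨ G.Adj (g x) (g y)

/-- `A` is a freezing set for `G`: every digitally continuous self-map fixing
every point of `A` is the identity. -/
def FreezingSet {X : Type*} (G : SimpleGraph X) (A : Set X) : Prop :=
  ∀ g : X → X, DigContinuous G g → (∀ a ∈ A, g a = a) → ∀ x : X, g x = x

/-- If `X'` is a proper subset of `X` that is a retract of `G`,
then no subset of `X'` is a freezing set for `G`. -/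
theorem stmt_17 {X : Type*} (G : SimpleGraph X) (X' : Set X)
    (hproper : X' ≠ Set.univ)
    (r : X → X) (hr : DigContinuous G r)
    (hrange : ∀ x : X, r x ∈ X') (hfix : ∀ x ∈ X', r x = x)
    (A : Set X) (hA : A ⊆ X') :
    ¬ FreezingSet G A := by
  intro hF
  apply hproper
  ext x
  simp only [Set.mem_univ, iff_true]
  have := hF r hr (fun a ha => hfix a (hA ha)) x
  rw [← this]
  exact hrange x
end

section
/- Let X ⊆ ℤⁿ, let 1 ≤ u ≤ n, let f : X → X be c_u-continuous, and let q, q' ∈ X be c_u-adjacent, and let 1 ≤ i ≤ n, writing p_i for the i-th coordinate projection. Then: (1) if p_i(f(q)) > p_i(q) > p_i(q'), then p_i(f(q')) > p_i(q'); and (2) if p_i(f(q)) < p_i(q) < p_i(q'), then p_i(f(q')) < p_i(q'). -/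
/-- Points `x, y ∈ ℤⁿ` are c_u-adjacent: `x ≠ y`, all coordinates differ by at
most 1, and at most `u` coordinates differ. -/
def cuAdj {n : ℕ} (u : ℕ) (x y : Fin n → ℤ) : Prop :=
  x ≠ y ∧ (∀ i : Fin n, |x i - y i| ≤ 1) ∧
    (Finset.univ.filter (fun i : Fin n => x i ≠ y i)).card ≤ u

/-- Let `X ⊆ ℤⁿ`, `1 ≤ u ≤ n`, `f : X → X` c_u-continuous, and
`q, q' ∈ X` c_u-adjacent. For each coordinate `i`:
(1) if `p_i(f q) > p_i q > p_i q'` then `p_i(f q') > p_i q'`;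
(2) if `p_i(f q) < p_i q < p_i q'` then `p_i(f q') < p_i q'`. -/
theorem stmt_18 {n : ℕ} (u : ℕ) (hu1 : 1 ≤ u) (hun : u ≤ n)
    (X : Set (Fin n → ℤ)) (f : X → X)
    (hf : ∀ a b : X, cuAdj u a.1 b.1 → f a = f b ∨ cuAdj u (f a).1 (f b).1)
    (q q' : X) (hadj : cuAdj u q.1 q'.1) (i : Fin n) :
    (q'.1 i < q.1 i → q.1 i < (f q).1 i → q'.1 i < (f q').1 i) ∧
      ((f q).1 i < q.1 i → q.1 i < q'.1 i → (f q').1 i < q'.1 i) := by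
  have h1 : |q.1 i - q'.1 i| ≤ 1 := hadj.2.1 i
  rw [abs_le] at h1
  rcases hf q q' hadj with h | h
  · rw [h]; omega
  · have h2 : |(f q).1 i - (f q').1 i| ≤ 1 := h.2.1 i
    rw [abs_le] at h2
    omega
end

section
/- Let X ⊆ ℤⁿ be finite, let 1 ≤ u ≤ n, let A ⊆ X, and let f : X → X be c_u-continuous. If every point of Bd(A) is a fixed point of f, then every point of A is a fixed point of f. Here Bd(A) = {x ∈ A : there exists y ∈ ℤⁿ \ A with y c₁-adjacent to x}. -/
/-- The boundary of `A ⊆ ℤⁿ`: points of `A` that are c₁-adjacent to some point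
of `ℤⁿ \ A`. -/
def Bd {n : ℕ} (A : Set (Fin n → ℤ)) : Set (Fin n → ℤ) :=
  {x | x ∈ A ∧ ∃ y : Fin n → ℤ, y ∉ A ∧ cuAdj 1 y x}

/-- Let `X ⊆ ℤⁿ` be finite, `1 ≤ u ≤ n`, `A ⊆ X`, and
`f : X → X` c_u-continuous. If every point of `Bd(A)` is a fixed point of `f`,
then every point of `A` is a fixed point of `f`. -/
theorem stmt_19 {n : ℕ} (u : ℕ) (hu1 : 1 ≤ u) (hun : u ≤ n)
    (X A : Set (Fin n → ℤ)) (hXfin : X.Finite) (hAX : A ⊆ X)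
    (f : X → X)
    (hf : ∀ a b : X, cuAdj u a.1 b.1 → f a = f b ∨ cuAdj u (f a).1 (f b).1)
    (hbd : ∀ (x : Fin n → ℤ) (hx : x ∈ Bd A), f ⟨x, hAX hx.1⟩ = ⟨x, hAX hx.1⟩) :
    ∀ (x : Fin n → ℤ) (hx : x ∈ A), f ⟨x, hAX hx⟩ = ⟨x, hAX hx⟩ := by
  classical
  -- Coordinatewise 1-Lipschitz bound from continuity.
  have hstep : ∀ a b : X, cuAdj u a.1 b.1 → ∀ i : Fin n,
      |(f a).1 i - (f b).1 i| ≤ 1 := by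
    intro a b hab i
    rcases hf a b hab with h | h
    · rw [h]; simp
    · exact h.2.1 i
  have hAfin : A.Finite := hXfin.subset hAX
  intro x hx
  -- Key claim: for each coordinate i and sign ε, ε * (f(x) i - x i) ≥ 0.
  have key : ∀ (i : Fin n) (ε : ℤ), (ε = 1 ∨ ε = -1) →
      0 ≤ ε * ((f ⟨x, hAX hx⟩).1 i - x i) := by
    intro i ε hε
    have hε0 : ε ≠ 0 := by rcases hε with h | h <;> simp [h]
    -- the walk in direction ε * e_i
    set g : ℕ → (Fin n → ℤ) := fun m => Function.update x i (x i + ε * m) with hg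
    have hgi : ∀ m : ℕ, g m i = x i + ε * m := by
      intro m; simp [hg]
    have hgj : ∀ (m : ℕ) (j : Fin n), j ≠ i → g m j = x j := by
      intro m j hj; simp [hg, Function.update_apply, hj]
    -- there is some m with g (m+1) ∉ A
    have hex : ∃ m : ℕ, g (m+1) ∉ A := by
      by_contra hall
      push_neg at hall
      have hinj : Function.Injective (fun m : ℕ => g (m+1)) := by
        intro a b hab
        have h2 : g (a+1) i = g (b+1) i := congrFun hab i
        rw [hgi, hgi] at h2
        have : ε * ((a:ℤ)+1) = ε * ((b:ℤ)+1) := by push_cast at h2 ⊢; linarith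
        have := mul_left_cancel₀ hε0 this
        exact_mod_cast by omega
      exact (Set.infinite_of_injective_forall_mem hinj hall) hAfin
    set k := Nat.find hex with hkdef
    have hk : g (k+1) ∉ A := Nat.find_spec hex
    have hmin : ∀ m < k, g (m+1) ∈ A := by
      intro m hm
      have := Nat.find_min hex hm
      simpa using this
    have hg0 : g 0 = x := by
      funext j
      by_cases hj : j = i
      · subst hj; rw [hgi]; simp
      · exact hgj 0 j hj
    have hgA : ∀ m, m ≤ k → g m ∈ A := by
      intro m hm
      cases m with
      | zero => rw [hg0]; exact hx
      | succ m' => exact hmin m' (by omega)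
    -- consecutive points of the walk are adjacent
    have hadj : ∀ (v : ℕ) (m : ℕ), 1 ≤ v → cuAdj v (g m) (g (m+1)) := by
      intro v m hv
      have hne : g m i ≠ g (m+1) i := by
        rw [hgi, hgi]
        intro h
        have : ε * (m:ℤ) = ε * ((m:ℤ)+1) := by push_cast at h ⊢; linarith
        have := mul_left_cancel₀ hε0 this
        linarith
      refine ⟨fun h => hne (congrFun h i), ?_, ?_⟩
      · intro j
        by_cases hj : j = i
        · subst hj
          rw [hgi, hgi]
          rcases hε with h | h <;> simp [h] <;> push_cast <;>
            rw [abs_le] <;> constructor <;> linarith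
        · rw [hgj m j hj, hgj (m+1) j hj]; simp
      · have hfilter : (Finset.univ.filter (fun j : Fin n => g m j ≠ g (m+1) j))
            = {i} := by
          ext j
          simp only [Finset.mem_filter, Finset.mem_univ, true_and, Finset.mem_singleton]
          constructor
          · intro hj
            by_contra hji
            exact hj (by rw [hgj m j hji, hgj (m+1) j hji])
          · intro hj; subst hj; exact hne
        rw [hfilter]; simpa using hv
    -- chain Lipschitz estimate
    have chain : ∀ m (hm : m ≤ k),
        |(f ⟨x, hAX hx⟩).1 i - (f ⟨g m, hAX (hgA m hm)⟩).1 i| ≤ (m : ℤ) := by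
      intro m
      induction m with
      | zero =>
        intro hm
        have hxe : (⟨g 0, hAX (hgA 0 hm)⟩ : X) = ⟨x, hAX hx⟩ := Subtype.ext hg0
        rw [hxe]
        simp
      | succ m' ih =>
        intro hm
        have hm' : m' ≤ k := by omega
        have h1 := ih hm'
        have h2 := hstep ⟨g m', hAX (hgA m' hm')⟩ ⟨g (m'+1), hAX (hgA (m'+1) hm)⟩
          (hadj u m' hu1) i
        calc |(f ⟨x, hAX hx⟩).1 i - (f ⟨g (m'+1), hAX (hgA (m'+1) hm)⟩).1 i|
            ≤ |(f ⟨x, hAX hx⟩).1 i - (f ⟨g m', hAX (hgA m' hm')⟩).1 i|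
              + |(f ⟨g m', hAX (hgA m' hm')⟩).1 i
                  - (f ⟨g (m'+1), hAX (hgA (m'+1) hm)⟩).1 i| := by
              exact abs_sub_le _ _ _
          _ ≤ (m' : ℤ) + 1 := by push_cast; linarith
          _ = ((m' + 1 : ℕ) : ℤ) := by push_cast; ring
    -- the end of the walk is in the boundary, hence fixed
    have hbdk : g k ∈ Bd A := by
      refine ⟨hgA k le_rfl, g (k+1), hk, ?_⟩
      have h := hadj 1 k le_rfl
      exact ⟨fun he => h.1 he.symm, fun j => by
        have := h.2.1 j; rwa [abs_sub_comm] at this, by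
        have := h.2.2
        have hfl : (Finset.univ.filter (fun j : Fin n => g (k+1) j ≠ g k j))
            = (Finset.univ.filter (fun j : Fin n => g k j ≠ g (k+1) j)) := by
          ext j; simp [ne_comm]
        rw [hfl]; exact this⟩
    have hfix : f ⟨g k, hAX (hgA k le_rfl)⟩ = ⟨g k, hAX (hgA k le_rfl)⟩ := by
      have := hbd (g k) hbdk
      convert this using 2
    have hfinal := chain k le_rfl
    rw [hfix] at hfinal
    have hgk : g k i = x i + ε * k := hgi k
    have hfinal : |(f ⟨x, hAX hx⟩).1 i - g k i| ≤ (k:ℤ) := hfinal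
    rw [hgk] at hfinal
    rw [abs_le] at hfinal
    rcases hε with h | h <;> subst h <;> nlinarith [hfinal.1, hfinal.2]
  -- conclude
  apply Subtype.ext
  funext i
  have h1 := key i 1 (Or.inl rfl)
  have h2 := key i (-1) (Or.inr rfl)
  simp only [one_mul, neg_mul] at h1 h2
  have : (f ⟨x, hAX hx⟩).1 i = x i := by linarith
  exact this
end
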